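/- arXiv:2301.09519 — 8 statements merged into one kernel-verified Lean document; each statement's English description precedes it below -/
import Mathlib

section
/- Let A be an n×n complex matrix all of whose eigenvalues have magnitude at most 1. Then for every positive integer L, the operator norm of A^L satisfies ‖A^L‖ ≤ n · (2(1 + ‖A‖)L)^n. -/
/-!
Divide `X ^ L` successively by the linear factors `X - λ₁, …, X - λₙ` of the characteristic
polynomial. This writes `X ^ L` in the Newton basis `∏_{j<k} (X - λⱼ)`, plus a multiple of the
characteristic polynomial, which vanishes at `A` by Cayley–Hamilton. Since `|λⱼ| ≤ 1`, each
division by `X - λⱼ` multiplies the ℓ¹ norm of the coefficients by at most the degree `L`, so the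
`k`-th Newton coefficient is at most `L ^ k`, while `‖∏_{j<k} (A - λⱼ)‖ ≤ (1 + ‖A‖) ^ k`.
-/

open Polynomial Finset

namespace Polynomial

variable {𝕜 : Type*} [NormedField 𝕜]

noncomputable def l1Norm (p : 𝕜[X]) : ℝ := p.sum fun _ a ↦ ‖a‖

lemma l1Norm_nonneg (p : 𝕜[X]) : 0 ≤ p.l1Norm :=
  sum_nonneg fun _ _ ↦ norm_nonneg _

lemma l1Norm_eq_sum_range {p : 𝕜[X]} {n : ℕ} (hn : p.natDegree < n) :
    p.l1Norm = ∑ i ∈ range n, ‖p.coeff i‖ :=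
  p.sum_over_range' (fun _ ↦ norm_zero) n hn

@[simp]
lemma l1Norm_X_pow (n : ℕ) : (X ^ n : 𝕜[X]).l1Norm = 1 := by
  simp [l1Norm, X_pow_eq_monomial]

lemma norm_eval_le_l1Norm (p : 𝕜[X]) {z : 𝕜} (hz : ‖z‖ ≤ 1) : ‖p.eval z‖ ≤ p.l1Norm := by
  rw [eval_eq_sum]
  refine (norm_sum_le _ _).trans (sum_le_sum fun i _ ↦ ?_)
  rw [norm_mul, norm_pow]
  exact mul_le_of_le_one_right (norm_nonneg _) (pow_le_one₀ (norm_nonneg _) hz)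

lemma norm_coeff_divByMonic_X_sub_C_le (p : 𝕜[X]) {a : 𝕜} (ha : ‖a‖ ≤ 1) (i : ℕ) :
    ‖(p /ₘ (X - C a)).coeff i‖ ≤ p.l1Norm := by
  rw [coeff_divByMonic_X_sub_C, l1Norm_eq_sum_range p.natDegree.lt_add_one]
  refine (norm_sum_le _ _).trans <| (sum_le_sum fun j _ ↦ ?_).trans <|
    sum_le_sum_of_subset_of_nonneg (fun j hj ↦ ?_) fun _ _ _ ↦ norm_nonneg _
  · rw [norm_mul, norm_pow]
    exact mul_le_of_le_one_left (norm_nonneg _) (pow_le_one₀ (norm_nonneg _) ha)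
  · simp only [mem_Icc, mem_range] at hj ⊢
    omega

lemma l1Norm_divByMonic_X_sub_C_le (p : 𝕜[X]) {a : 𝕜} (ha : ‖a‖ ≤ 1) :
    (p /ₘ (X - C a)).l1Norm ≤ p.natDegree * p.l1Norm := by
  have hq : (p /ₘ (X - C a)).natDegree < p.natDegree + 1 := by
    rw [natDegree_divByMonic _ (monic_X_sub_C a)]
    omega
  have htop : (p /ₘ (X - C a)).coeff p.natDegree = 0 := by
    simp [coeff_divByMonic_X_sub_C]
  rw [l1Norm_eq_sum_range hq, sum_range_succ, htop, norm_zero, add_zero]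
  simpa using sum_le_sum fun i (_ : i ∈ range p.natDegree) ↦
    norm_coeff_divByMonic_X_sub_C_le p ha i

end Polynomial

section NormedAlgebra

variable {𝕜 𝒜 : Type*} [NormedField 𝕜] [NormedRing 𝒜] [NormedAlgebra 𝕜 𝒜]

lemma mul_aeval_eq_eval_smul_add (x y : 𝒜) (p : 𝕜[X]) (a : 𝕜) :
    y * aeval x p =
      p.eval a • y + y * (x - algebraMap 𝕜 𝒜 a) * aeval x (p /ₘ (X - C a)) := by
  conv_lhs => rw [← modByMonic_add_div p (X - C a), modByMonic_X_sub_C_eq_C_eval]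
  rw [map_add, map_mul, aeval_C, mul_add, ← Algebra.commutes, ← Algebra.smul_def, map_sub,
    aeval_X, aeval_C, mul_assoc]

lemma norm_mul_sub_algebraMap_le (x y : 𝒜) {a : 𝕜} (ha : ‖a‖ ≤ 1) :
    ‖y * (x - algebraMap 𝕜 𝒜 a)‖ ≤ ‖y‖ * (1 + ‖x‖) := by
  rw [mul_sub, ← Algebra.commutes, ← Algebra.smul_def]
  calc ‖y * x - a • y‖ ≤ ‖y‖ * ‖x‖ + ‖a‖ * ‖y‖ :=
        (norm_sub_le _ _).trans (add_le_add (norm_mul_le _ _) (norm_smul _ _).le)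
    _ ≤ ‖y‖ * (1 + ‖x‖) := by nlinarith [norm_nonneg y]

/-- The left factor `y` is what makes the induction on the roots go through: after peeling off
the root `a`, the new factor `y * (x - a)` annihilates the product over the remaining roots. -/
theorem norm_mul_aeval_le_of_mul_aeval_prod_eq_zero {x : 𝒜} {s : Multiset 𝕜}
    (hs : ∀ a ∈ s, ‖a‖ ≤ 1) {y : 𝒜} (hy : y * aeval x (s.map fun a ↦ X - C a).prod = 0)
    {p : 𝕜[X]} {d : ℕ} (hp : p.natDegree ≤ d) :
    ‖y * aeval x p‖ ≤ ‖y‖ * p.l1Norm * ∑ k ∈ range s.card, (d * (1 + ‖x‖)) ^ k := by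
  induction s using Multiset.induction_on generalizing y p with
  | empty =>
    obtain rfl : y = 0 := by simpa using hy
    simp
  | cons a s ih =>
    rw [Multiset.forall_mem_cons] at hs
    set q := p /ₘ (X - C a)
    have hy' : y * (x - algebraMap 𝕜 𝒜 a) * aeval x (s.map fun a ↦ X - C a).prod = 0 := by
      simpa [mul_assoc] using hy
    have hq : q.natDegree ≤ d := by
      rw [natDegree_divByMonic _ (monic_X_sub_C a)]
      omega
    have hq_norm : q.l1Norm ≤ d * p.l1Norm :=
      (l1Norm_divByMonic_X_sub_C_le p hs.1).trans (by gcongr; exact l1Norm_nonneg p)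
    rw [mul_aeval_eq_eval_smul_add x y p a, Multiset.card_cons, geom_sum_succ]
    calc _ ≤ ‖p.eval a‖ * ‖y‖ + ‖y * (x - algebraMap 𝕜 𝒜 a) * aeval x q‖ :=
          (norm_add_le _ _).trans (by rw [norm_smul])
      _ ≤ p.l1Norm * ‖y‖ +
            ‖y‖ * (1 + ‖x‖) * (d * p.l1Norm) * ∑ k ∈ range s.card, (d * (1 + ‖x‖)) ^ k := by
          gcongr
          · exact norm_eval_le_l1Norm p hs.1
          · refine (ih hs.2 hy' hq).trans ?_
            gcongr
            · exact l1Norm_nonneg q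
            · exact norm_mul_sub_algebraMap_le x y hs.1
      _ = _ := by ring

end NormedAlgebra

lemma CStarRing.norm_one_le {E : Type*} [NormedRing E] [StarRing E] [CStarRing E] :
    ‖(1 : E)‖ ≤ 1 := by
  nontriviality E
  exact CStarRing.norm_one.le

open scoped Matrix.Norms.L2Operator

/-- If all eigenvalues (roots of the characteristic polynomial) of a complex
`n × n` matrix `A` have magnitude at most `1`, then for every positive integer `L`, the operator
(spectral) norm of `A ^ L` satisfies `‖A ^ L‖ ≤ n * (2 * (1 + ‖A‖) * L) ^ n`. -/
theorem powering_bound (n : ℕ) (A : Matrix (Fin n) (Fin n) ℂ)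
    (hA : ∀ μ ∈ A.charpoly.roots, ‖μ‖ ≤ 1)
    (L : ℕ) (hL : 0 < L) :
    ‖A ^ L‖ ≤ (n : ℝ) * (2 * (1 + ‖A‖) * (L : ℝ)) ^ n := by
  have hCH : 1 * aeval A (A.charpoly.roots.map fun a ↦ X - C a).prod = 0 := by
    rw [one_mul, ← (IsAlgClosed.splits _).eq_prod_roots_of_monic A.charpoly_monic,
      Matrix.aeval_self_charpoly]
  have key := norm_mul_aeval_le_of_mul_aeval_prod_eq_zero hA hCH (natDegree_X_pow_le L)
  rw [one_mul, aeval_X_pow, l1Norm_X_pow, mul_one, IsAlgClosed.card_roots_eq_natDegree,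
    A.charpoly_natDegree_eq_dim, Fintype.card_fin] at key
  have hr : 1 ≤ L * (1 + ‖A‖) := one_le_mul_of_one_le_of_one_le (mod_cast hL) (by simp)
  calc ‖A ^ L‖ ≤ ∑ k ∈ range n, (L * (1 + ‖A‖)) ^ k :=
        key.trans (mul_le_of_le_one_left (by positivity) CStarRing.norm_one_le)
    _ ≤ ∑ k ∈ range n, (2 * (1 + ‖A‖) * L) ^ n := sum_le_sum fun k hk ↦
        (pow_le_pow_right₀ hr (mem_range.1 hk).le).trans
          (pow_le_pow_left₀ (by positivity) (by nlinarith [norm_nonneg A]) n)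
    _ = n * (2 * (1 + ‖A‖) * L) ^ n := by simp
end

section
/- Let A be an n×n upper-triangular complex matrix whose diagonal entries all have magnitude at most 1. Then for every positive integer L, every entry of A^L satisfies |(A^L)_{ij}| ≤ (2(1 + ‖A‖)L)^n, and (A^L)_{ij} = 0 whenever i > j. -/
/-!
An upper triangular `A` with `‖A i i‖ ≤ 1` and all entries bounded by `c ≥ 1` (for instance
`c = 1 + ‖A‖`) satisfies `‖(A ^ K) i j‖ ≤ (c * K) ^ (j - i)`. Indeed, in
`(A ^ (K + 1)) i j = ∑ k, (A ^ K) i k * A k j` only the indices `i ≤ k ≤ j` contribute: the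
term `k = j` is at most `(c * K) ^ (j - i)`, each of the other `j - i` terms at most
`c * (c * K) ^ (j - i - 1)`, and Bernoulli's inequality bounds the total by
`(c * (K + 1)) ^ (j - i)`.
-/

open scoped Matrix.Norms.L2Operator

open Finset

namespace Matrix

theorem norm_apply_le_l2_opNorm {m n 𝕜 : Type*} [RCLike 𝕜] [Fintype m] [Fintype n]
    [DecidableEq n] (A : Matrix m n 𝕜) (i : m) (j : n) : ‖A i j‖ ≤ ‖A‖ :=
  calc ‖A i j‖ = ‖(EuclideanSpace.equiv m 𝕜).symm (A *ᵥ EuclideanSpace.single j 1) i‖ := by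
        simp
    _ ≤ ‖(EuclideanSpace.equiv m 𝕜).symm (A *ᵥ EuclideanSpace.single j 1)‖ :=
        PiLp.norm_apply_le _ i
    _ ≤ ‖A‖ * ‖EuclideanSpace.single j (1 : 𝕜)‖ := l2_opNorm_mulVec A _
    _ = ‖A‖ := by simp

section UpperTriangular

variable {R : Type*} [SeminormedRing R] {n : ℕ}

theorem norm_apply_le_pow_sub_of_blockTriangular {A : Matrix (Fin n) (Fin n) R}
    (hA : A.BlockTriangular id) (hdiag : ∀ i, ‖A i i‖ ≤ 1) {c : ℝ} (hc : 1 ≤ c)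
    (hAc : ∀ i j, ‖A i j‖ ≤ c) (i j : Fin n) : ‖A i j‖ ≤ c ^ (j - i : ℕ) := by
  rcases lt_trichotomy i j with hij | rfl | hji
  · exact (hAc i j).trans (le_self_pow₀ hc (by omega))
  · simpa using hdiag i
  · rw [hA hji, norm_zero]
    positivity

theorem norm_mul_apply_le_add_pow_of_blockTriangular {B A : Matrix (Fin n) (Fin n) R}
    (hB : B.BlockTriangular id) (hA : A.BlockTriangular id) {x c : ℝ} (hx : 1 ≤ x)
    (hBx : ∀ i j, ‖B i j‖ ≤ x ^ (j - i : ℕ)) (hdiag : ∀ i, ‖A i i‖ ≤ 1)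
    (hAc : ∀ i j, ‖A i j‖ ≤ c) (i j : Fin n) : ‖(B * A) i j‖ ≤ (x + c) ^ (j - i : ℕ) := by
  have hc : 0 ≤ c := (norm_nonneg _).trans (hAc i j)
  rcases lt_or_ge j i with hji | hij
  · rw [hB.mul hA hji, norm_zero]
    positivity
  set d := (j - i : ℕ)
  have hsupport : (B * A) i j = ∑ k ∈ Icc i j, B i k * A k j := by
    rw [mul_apply]
    refine (sum_subset (subset_univ _) fun k _ hk => ?_).symm
    rcases not_and_or.mp (mem_Icc.not.mp hk) with hik | hkj
    · rw [hB (not_le.mp hik), zero_mul]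
    · rw [hA (not_le.mp hkj), mul_zero]
  have hcard : (Ico i j).card = d := by
    rw [Fin.card_Ico]
  calc ‖(B * A) i j‖ ≤ ‖B i j‖ * ‖A j j‖ + ∑ k ∈ Ico i j, ‖B i k‖ * ‖A k j‖ := by
        rw [hsupport, ← Ico_insert_right hij, sum_insert right_notMem_Ico]
        exact (norm_add_le _ _).trans <| add_le_add (norm_mul_le _ _) <|
          (norm_sum_le _ _).trans <| sum_le_sum fun k _ => norm_mul_le _ _
    _ ≤ x ^ d * 1 + ∑ k ∈ Ico i j, x ^ (d - 1) * c := by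
        gcongr with k hk
        · exact hBx i j
        · exact hdiag j
        · have hk := mem_Ico.mp hk
          exact (hBx i k).trans (pow_le_pow_right₀ hx (by omega))
        · exact hAc k j
    _ = x ^ d + d * x ^ (d - 1) * c := by
        rw [sum_const, hcard, nsmul_eq_mul, mul_one, mul_assoc]
    _ ≤ (x + c) ^ d := pow_add_mul_le_add_pow (by linarith) (by linarith) d

theorem norm_pow_apply_le_of_blockTriangular {A : Matrix (Fin n) (Fin n) R}
    (hA : A.BlockTriangular id) (hdiag : ∀ i, ‖A i i‖ ≤ 1) {c : ℝ} (hc : 1 ≤ c)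
    (hAc : ∀ i j, ‖A i j‖ ≤ c) {K : ℕ} (hK : 1 ≤ K) (i j : Fin n) :
    ‖(A ^ K) i j‖ ≤ (c * K) ^ (j - i : ℕ) := by
  induction K, hK using Nat.le_induction generalizing i j with
  | base => simpa using norm_apply_le_pow_sub_of_blockTriangular hA hdiag hc hAc i j
  | succ K hK ih =>
    rw [pow_succ, Nat.cast_succ, mul_add_one]
    exact norm_mul_apply_le_add_pow_of_blockTriangular (hA.pow K) hA
      (one_le_mul_of_one_le_of_one_le hc (by exact_mod_cast hK)) ih hdiag hAc i j

end UpperTriangular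

end Matrix

open Matrix in
/-- If `A` is an `n × n` upper-triangular complex matrix whose diagonal entries
all have magnitude at most `1`, then for every positive integer `L`, every entry of `A ^ L`
satisfies `|(A ^ L) i j| ≤ (2 * (1 + ‖A‖) * L) ^ n`, and `(A ^ L) i j = 0` whenever `i > j`.
Here `‖·‖` is the operator (spectral) norm. -/
theorem entries_of_power_of_upper_triangular (n : ℕ) (A : Matrix (Fin n) (Fin n) ℂ)
    (hupper : ∀ i j : Fin n, (j : ℕ) < (i : ℕ) → A i j = 0)
    (hdiag : ∀ i : Fin n, ‖A i i‖ ≤ 1)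
    (L : ℕ) (hL : 0 < L) :
    (∀ i j : Fin n, ‖(A ^ L) i j‖ ≤ (2 * (1 + ‖A‖) * (L : ℝ)) ^ n) ∧
      (∀ i j : Fin n, (j : ℕ) < (i : ℕ) → (A ^ L) i j = 0) := by
  have hA : A.BlockTriangular id := hupper
  set c := 1 + ‖A‖
  have hc : 1 ≤ c := le_add_of_nonneg_right (norm_nonneg A)
  have hAc : ∀ i j, ‖A i j‖ ≤ c := fun i j =>
    (norm_apply_le_l2_opNorm A i j).trans (le_add_of_nonneg_left zero_le_one)
  have hcL : 1 ≤ c * L := one_le_mul_of_one_le_of_one_le hc (by exact_mod_cast hL)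
  refine ⟨fun i j => ?_, fun i j hji => hA.pow L hji⟩
  calc ‖(A ^ L) i j‖ ≤ (c * L) ^ (j - i : ℕ) :=
        norm_pow_apply_le_of_blockTriangular hA hdiag hc hAc hL i j
    _ ≤ (c * L) ^ n := pow_le_pow_right₀ hcL (by omega)
    _ ≤ (2 * c * L) ^ n := by gcongr; linarith
end

section
/- Let K ≥ 3, and let u_1, …, u_t be independent mean-zero random vectors in ℝ^p with finite fourth moments, each of which is (4,2,K)-hypercontractive. Then for any matrices M_1, …, M_t ∈ ℝ^{m×p}, the random vector X = M_1 u_1 + ⋯ + M_t u_t is (4,2,K)-hypercontractive, i.e. for every v ∈ ℝ^m, E[⟨v, X⟩⁴] ≤ K · (E[⟨v, X⟩²])². -/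
/-!
Project onto a direction `v`: `⟨v, X⟩ = ∑ᵢ ⟨M_iᵀ v, u_i⟩` is a sum of independent, mean-zero,
hypercontractive real random variables, so it suffices to treat two summands `S, Z`. By
independence and the vanishing means, `E[(S + Z)⁴] = E[S⁴] + 6 E[S²] E[Z²] + E[Z⁴]` and
`E[(S + Z)²] = E[S²] + E[Z²]`, and `K ≥ 3` absorbs the cross term:
`E[S⁴] + 6 E[S²] E[Z²] + E[Z⁴] ≤ K (E[S²]² + 2 E[S²] E[Z²] + E[Z²]²)`.
-/

open MeasureTheory ProbabilityTheory Finset Matrix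

namespace ProbabilityTheory

variable {Ω : Type*} {mΩ : MeasurableSpace Ω} {μ : Measure Ω}

/-- The scalar form of `(4,2,K)`-hypercontractivity: a random vector has it iff all its
one-dimensional projections do. -/
def IsHypercontractive (K : ℝ) (X : Ω → ℝ) (μ : Measure Ω) : Prop :=
  ∫ ω, X ω ^ 4 ∂μ ≤ K * (∫ ω, X ω ^ 2 ∂μ) ^ 2

lemma _root_.MeasureTheory.MemLp.integrable_pow_of_le [IsFiniteMeasure μ] {X : Ω → ℝ} {n k : ℕ}
    (hX : MemLp X n μ) (hk : k ≤ n) : Integrable (fun ω => X ω ^ k) μ :=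
  (hX.mono_exponent (by exact_mod_cast hk)).integrable_norm_pow'.mono'
    (hX.aestronglyMeasurable.pow k) (.of_forall fun ω => (norm_pow (X ω) k).le)

lemma IndepFun.integral_add_pow [IsFiniteMeasure μ] {X Y : Ω → ℝ} {n : ℕ} (hXY : IndepFun X Y μ)
    (hX : MemLp X n μ) (hY : MemLp Y n μ) :
    ∫ ω, (X ω + Y ω) ^ n ∂μ =
      ∑ k ∈ range (n + 1), (∫ ω, X ω ^ k ∂μ) * (∫ ω, Y ω ^ (n - k) ∂μ) * n.choose k := by
  have hpow (k : ℕ) : IndepFun (fun ω => X ω ^ k) (fun ω => Y ω ^ (n - k)) μ :=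
    hXY.comp (φ := fun x => x ^ k) (ψ := fun x => x ^ (n - k)) (by fun_prop) (by fun_prop)
  simp_rw [add_pow]
  rw [integral_finsetSum]
  · refine sum_congr rfl fun k _ => ?_
    rw [integral_mul_const]
    congr 1
    exact (hpow k).integral_mul_eq_mul_integral (hX.aestronglyMeasurable.pow k)
      (hY.aestronglyMeasurable.pow _)
  · intro k hk
    exact ((hpow k).integrable_mul (hX.integrable_pow_of_le (by simpa [Nat.lt_succ_iff] using hk))
      (hY.integrable_pow_of_le (Nat.sub_le n k))).mul_const _

variable [IsProbabilityMeasure μ] {X Y : Ω → ℝ}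

lemma IndepFun.integral_add_sq (hXY : IndepFun X Y μ) (hX : MemLp X 2 μ) (hY : MemLp Y 2 μ)
    (hX0 : ∫ ω, X ω ∂μ = 0) :
    ∫ ω, (X ω + Y ω) ^ 2 ∂μ = ∫ ω, X ω ^ 2 ∂μ + ∫ ω, Y ω ^ 2 ∂μ := by
  rw [hXY.integral_add_pow (n := 2) (mod_cast hX) (mod_cast hY)]
  simp [sum_range_succ, hX0, add_comm]

lemma IndepFun.integral_add_pow_four (hXY : IndepFun X Y μ) (hX : MemLp X 4 μ) (hY : MemLp Y 4 μ)
    (hX0 : ∫ ω, X ω ∂μ = 0) (hY0 : ∫ ω, Y ω ∂μ = 0) :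
    ∫ ω, (X ω + Y ω) ^ 4 ∂μ =
      ∫ ω, X ω ^ 4 ∂μ + 6 * (∫ ω, X ω ^ 2 ∂μ) * (∫ ω, Y ω ^ 2 ∂μ) + ∫ ω, Y ω ^ 4 ∂μ := by
  rw [hXY.integral_add_pow (n := 4) (mod_cast hX) (mod_cast hY)]
  simp [sum_range_succ, hX0, hY0, Nat.choose]
  ring

lemma IndepFun.isHypercontractive_add {K : ℝ} (hK : 3 ≤ K) (hXY : IndepFun X Y μ)
    (hX : MemLp X 4 μ) (hY : MemLp Y 4 μ) (hX0 : ∫ ω, X ω ∂μ = 0) (hY0 : ∫ ω, Y ω ∂μ = 0)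
    (hXK : IsHypercontractive K X μ) (hYK : IsHypercontractive K Y μ) :
    IsHypercontractive K (X + Y) μ := by
  have hX2 : 0 ≤ ∫ ω, X ω ^ 2 ∂μ := integral_nonneg fun ω => sq_nonneg _
  have hY2 : 0 ≤ ∫ ω, Y ω ^ 2 ∂μ := integral_nonneg fun ω => sq_nonneg _
  have hcross : 6 * (∫ ω, X ω ^ 2 ∂μ) * (∫ ω, Y ω ^ 2 ∂μ) ≤
      2 * K * (∫ ω, X ω ^ 2 ∂μ) * (∫ ω, Y ω ^ 2 ∂μ) := by
    gcongr; linarith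
  unfold IsHypercontractive at *
  simp only [Pi.add_apply]
  rw [hXY.integral_add_pow_four hX hY hX0 hY0,
    hXY.integral_add_sq (hX.mono_exponent (by norm_num)) (hY.mono_exponent (by norm_num)) hX0]
  linarith

lemma iIndepFun.isHypercontractive_sum {ι : Type*} {K : ℝ} (hK : 3 ≤ K) {Y : ι → Ω → ℝ}
    (hY : iIndepFun Y μ) (hY4 : ∀ i, MemLp (Y i) 4 μ) (hY0 : ∀ i, ∫ ω, Y i ω ∂μ = 0)
    (hYK : ∀ i, IsHypercontractive K (Y i) μ) (s : Finset ι) :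
    IsHypercontractive K (∑ i ∈ s, Y i) μ := by
  induction s using Finset.cons_induction with
  | empty => simp [IsHypercontractive]
  | cons a s ha ih =>
    rw [sum_cons]
    refine IndepFun.isHypercontractive_add hK
      (hY.indepFun_finsetSum_of_notMem₀ (fun i => (hY4 i).aemeasurable) ha).symm
      (hY4 a) (memLp_finsetSum' s fun i _ => hY4 i) (hY0 a) ?_ (hYK a) ih
    simp only [Finset.sum_apply]
    rw [integral_finsetSum s fun i _ => (hY4 i).integrable (by norm_num)]
    simp [hY0]

end ProbabilityTheory

lemma MeasureTheory.MemLp.dotProduct {Ω ι : Type*} [Fintype ι] {mΩ : MeasurableSpace Ω}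
    {μ : Measure Ω} {p : ENNReal} {u : Ω → ι → ℝ} (hu : ∀ j, MemLp (fun ω => u ω j) p μ)
    (w : ι → ℝ) : MemLp (fun ω => w ⬝ᵥ u ω) p μ :=
  memLp_finsetSum _ fun j _ => (hu j).const_mul (w j)

lemma MeasureTheory.integral_dotProduct_eq_zero {Ω ι : Type*} [Fintype ι] {mΩ : MeasurableSpace Ω}
    {μ : Measure Ω} {u : Ω → ι → ℝ} (hu : ∀ j, Integrable (fun ω => u ω j) μ)
    (hu0 : ∀ j, ∫ ω, u ω j ∂μ = 0) (w : ι → ℝ) : ∫ ω, w ⬝ᵥ u ω ∂μ = 0 := by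
  simp [dotProduct, integral_finsetSum _ fun j _ => (hu j).const_mul (w j), integral_const_mul, hu0]

lemma Matrix.dotProduct_sum_mulVec {ι m n R : Type*} [Fintype m] [Fintype n] [CommSemiring R]
    (s : Finset ι) (v : m → R) (M : ι → Matrix m n R) (x : ι → n → R) :
    v ⬝ᵥ ∑ i ∈ s, M i *ᵥ x i = ∑ i ∈ s, (v ᵥ* M i) ⬝ᵥ x i := by
  simp [dotProduct_sum, dotProduct_mulVec]

theorem hypercontractive_of_linear_transform_general
    {Ω : Type*} [MeasureSpace Ω] [IsProbabilityMeasure (ℙ : Measure Ω)]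
    (K : ℝ) (hK : 3 ≤ K) (t m p : ℕ)
    (u : Fin t → Ω → (Fin p → ℝ))
    (hindep : iIndepFun u ℙ)
    (hmom : ∀ (i : Fin t) (j : Fin p), MemLp (fun ω => u i ω j) 4 ℙ)
    (hmean : ∀ (i : Fin t) (j : Fin p), ∫ ω, u i ω j = 0)
    (hhyp : ∀ (i : Fin t) (v : Fin p → ℝ),
      ∫ ω, (∑ j, v j * u i ω j) ^ 4 ≤ K * (∫ ω, (∑ j, v j * u i ω j) ^ 2) ^ 2)
    (M : Fin t → Matrix (Fin m) (Fin p) ℝ) :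
    ∀ v : Fin m → ℝ,
      ∫ ω, (∑ a, v a * (∑ i, (M i).mulVec (u i ω)) a) ^ 4 ≤
        K * (∫ ω, (∑ a, v a * (∑ i, (M i).mulVec (u i ω)) a) ^ 2) ^ 2 := by
  intro v
  let Y : Fin t → Ω → ℝ := fun i ω => (v ᵥ* M i) ⬝ᵥ u i ω
  have hY : iIndepFun Y ℙ :=
    hindep.comp (fun i x => (v ᵥ* M i) ⬝ᵥ x) fun i => by fun_prop
  have hsum := hY.isHypercontractive_sum hK (fun i => MemLp.dotProduct (hmom i) _)
    (fun i => integral_dotProduct_eq_zero (fun j => (hmom i j).integrable (by norm_num))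
      (hmean i) _)
    (fun i => hhyp i _) univ
  simp only [IsHypercontractive, Finset.sum_apply, Y, ← dotProduct_sum_mulVec] at hsum
  exact hsum

/-- Let `K ≥ 3` and let `u 0, …, u (t-1)` be independent mean-zero random vectors
in `ℝ^p` with finite fourth moments, each `(4,2,K)`-hypercontractive (i.e. for every direction `v`,
`E[⟨v, u i⟩^4] ≤ K * E[⟨v, u i⟩^2]^2`).  Then for any matrices `M 0, …, M (t-1) ∈ ℝ^{m×p}`, the
random vector `X = ∑ i, M i *ᵥ u i` is `(4,2,K)`-hypercontractive. -/
theorem hypercontractive_of_linear_transform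
    {Ω : Type*} [MeasureSpace Ω] [IsProbabilityMeasure (ℙ : Measure Ω)]
    (K : ℝ) (hK : 3 ≤ K) (t m p : ℕ)
    (u : Fin t → Ω → (Fin p → ℝ))
    (hmeas : ∀ i, Measurable (u i))
    (hindep : iIndepFun u ℙ)
    (hmom : ∀ (i : Fin t) (j : Fin p), MemLp (fun ω => u i ω j) 4 ℙ)
    (hmean : ∀ (i : Fin t) (j : Fin p), ∫ ω, u i ω j = 0)
    (hhyp : ∀ (i : Fin t) (v : Fin p → ℝ),
      ∫ ω, (∑ j, v j * u i ω j) ^ 4 ≤ K * (∫ ω, (∑ j, v j * u i ω j) ^ 2) ^ 2)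
    (M : Fin t → Matrix (Fin m) (Fin p) ℝ) :
    ∀ v : Fin m → ℝ,
      ∫ ω, (∑ a, v a * (∑ i, (M i).mulVec (u i ω)) a) ^ 4 ≤
        K * (∫ ω, (∑ a, v a * (∑ i, (M i).mulVec (u i ω)) a) ^ 2) ^ 2 :=
  hypercontractive_of_linear_transform_general K hK t m p u hindep hmom hmean hhyp M
end

section
/- Let K ≥ 3 and let z be a real-valued random variable with E[z] = 0, E[z²] ≥ 1, and E[z⁴] ≤ K. Then for every real number β, the probability that |z − β| ≤ 0.1 is at most 1 − 1/(10K). -/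
/-!
If `z` put mass `p > 1 - 1/(10K)` on the window `A = {|z - β| ≤ 0.1}`, its complement would have
mass `q < 1/(10K) ≤ 1/10`, where `K ≥ E[z⁴] ≥ E[z²]² ≥ 1`. Cauchy–Schwarz against the fourth moment
shows that `Aᶜ` then carries neither much of the second moment, `(∫_{Aᶜ} z²)² ≤ K q < 1/10`, nor
much of the first, `(∫_{Aᶜ} z)⁴ ≤ K q² < 1/100`. Since `E[z] = 0`, the mean of `z` over `A`, which
is within `0.1` of `p β`, is small, so `|β| < 0.48`; but then
`E[z²] ≤ (|β| + 0.1)² + ∫_{Aᶜ} z² < 1`.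
-/

open MeasureTheory ProbabilityTheory

namespace MeasureTheory

lemma MemLp.sq {α : Type*} {m : MeasurableSpace α} {μ : Measure α} {f : α → ℝ}
    (hf : MemLp f 4 μ) : MemLp (fun x => f x ^ 2) 2 μ := by
  refine (memLp_two_iff_integrable_sq (hf.1.pow 2)).2 ?_
  simpa [← pow_mul, Even.pow_abs ⟨2, rfl⟩] using hf.integrable_norm_pow (p := 4) (by norm_num)

end MeasureTheory

section CauchySchwarz

variable {α : Type*} {m : MeasurableSpace α}

lemma sq_integral_le_measureReal_univ_mul_integral_sq {ν : Measure α} [IsFiniteMeasure ν]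
    {f : α → ℝ} (hf : MemLp f 2 ν) :
    (∫ x, f x ∂ν) ^ 2 ≤ ν.real Set.univ * ∫ x, f x ^ 2 ∂ν := by
  have hf1 : Integrable f ν := hf.integrable one_le_two
  have hf2 : Integrable (fun x => f x ^ 2) ν := hf.integrable_sq
  have hquad : ∀ t : ℝ, 0 ≤ ν.real Set.univ * (t * t) + (-2 * ∫ x, f x ∂ν) * t
      + ∫ x, f x ^ 2 ∂ν := fun t => by
    have hexpand : ∫ x, (f x - t) ^ 2 ∂ν
        = ν.real Set.univ * (t * t) + (-2 * ∫ x, f x ∂ν) * t + ∫ x, f x ^ 2 ∂ν := by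
      simp_rw [sub_sq]
      rw [integral_add (f := fun x => f x ^ 2 - 2 * f x * t)
          (hf2.sub ((hf1.const_mul 2).mul_const t)) (integrable_const _),
        integral_sub hf2 ((hf1.const_mul 2).mul_const t), integral_mul_const,
        integral_const_mul, integral_const, smul_eq_mul]
      ring
    exact hexpand ▸ integral_nonneg fun x => sq_nonneg _
  have := discrim_le_zero hquad
  rw [discrim] at this
  linarith

variable {μ : Measure α} {f : α → ℝ}

lemma sq_setIntegral_le_integral_sq_mul_measureReal [IsFiniteMeasure μ] (hf : MemLp f 2 μ)
    (s : Set α) : (∫ x in s, f x ∂μ) ^ 2 ≤ (∫ x, f x ^ 2 ∂μ) * μ.real s := by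
  calc (∫ x in s, f x ∂μ) ^ 2 ≤ μ.real s * ∫ x in s, f x ^ 2 ∂μ := by
        simpa using sq_integral_le_measureReal_univ_mul_integral_sq (hf.restrict s)
    _ ≤ (∫ x, f x ^ 2 ∂μ) * μ.real s := by
        rw [mul_comm]
        exact mul_le_mul_of_nonneg_right
          (setIntegral_le_integral hf.integrable_sq (.of_forall fun x => sq_nonneg _))
          measureReal_nonneg

lemma sq_setIntegral_sq_le_integral_pow_four_mul [IsFiniteMeasure μ] (hf : MemLp f 4 μ)
    (s : Set α) : (∫ x in s, f x ^ 2 ∂μ) ^ 2 ≤ (∫ x, f x ^ 4 ∂μ) * μ.real s := by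
  simpa only [← pow_mul] using sq_setIntegral_le_integral_sq_mul_measureReal hf.sq s

lemma setIntegral_pow_four_le_integral_pow_four_mul [IsProbabilityMeasure μ] (hf : MemLp f 4 μ)
    (s : Set α) : (∫ x in s, f x ∂μ) ^ 4 ≤ (∫ x, f x ^ 4 ∂μ) * μ.real s ^ 2 := by
  have hsq := sq_setIntegral_le_integral_sq_mul_measureReal (hf.mono_exponent (by norm_num)) s
  have h2 : (∫ x, f x ^ 2 ∂μ) ^ 2 ≤ ∫ x, f x ^ 4 ∂μ := by
    simpa using sq_setIntegral_sq_le_integral_pow_four_mul hf Set.univ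
  calc (∫ x in s, f x ∂μ) ^ 4 = ((∫ x in s, f x ∂μ) ^ 2) ^ 2 := by ring
    _ ≤ ((∫ x, f x ^ 2 ∂μ) * μ.real s) ^ 2 := pow_le_pow_left₀ (sq_nonneg _) hsq 2
    _ = (∫ x, f x ^ 2 ∂μ) ^ 2 * μ.real s ^ 2 := by ring
    _ ≤ (∫ x, f x ^ 4 ∂μ) * μ.real s ^ 2 := by gcongr

end CauchySchwarz

section Concentrated

variable {α : Type*} {m : MeasurableSpace α} {μ : Measure α} {f : α → ℝ} {s : Set α} {c ε : ℝ}

lemma abs_measureReal_mul_le_of_integral_eq_zero [IsFiniteMeasure μ] (hf : Integrable f μ)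
    (hf0 : ∫ x, f x ∂μ = 0) (hs : NullMeasurableSet s μ) (hfs : ∀ x ∈ s, |f x - c| ≤ ε) :
    |μ.real s * c| ≤ ε * μ.real s + |∫ x in sᶜ, f x ∂μ| := by
  have hdev : |∫ x in s, (f x - c) ∂μ| ≤ ε * μ.real s :=
    norm_setIntegral_le_of_norm_le_const (f := fun x => f x - c) (measure_lt_top μ s) hfs
  have hsplit : μ.real s * c = -∫ x in s, (f x - c) ∂μ - ∫ x in sᶜ, f x ∂μ := by
    rw [integral_sub hf.integrableOn (integrable_const c), setIntegral_const, smul_eq_mul]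
    linarith [integral_add_compl₀ hs hf]
  calc |μ.real s * c| ≤ |-∫ x in s, (f x - c) ∂μ| + |∫ x in sᶜ, f x ∂μ| :=
        hsplit ▸ abs_sub _ _
    _ ≤ ε * μ.real s + |∫ x in sᶜ, f x ∂μ| := by rw [abs_neg]; gcongr

lemma integral_sq_le_of_abs_sub_le [IsFiniteMeasure μ] (hf : MemLp f 2 μ)
    (hs : NullMeasurableSet s μ) (hfs : ∀ x ∈ s, |f x - c| ≤ ε) :
    ∫ x, f x ^ 2 ∂μ ≤ (|c| + ε) ^ 2 * μ.real s + ∫ x in sᶜ, f x ^ 2 ∂μ := by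
  have hbound : ∀ x ∈ s, ‖f x ^ 2‖ ≤ (|c| + ε) ^ 2 := fun x hx => by
    have hfx : |f x| ≤ |c| + ε := by
      linarith [abs_sub_abs_le_abs_sub (f x) c, hfs x hx]
    rw [Real.norm_eq_abs, abs_pow]
    exact pow_le_pow_left₀ (abs_nonneg _) hfx 2
  rw [← integral_add_compl₀ hs hf.integrable_sq]
  gcongr
  exact (le_abs_self _).trans (norm_setIntegral_le_of_norm_le_const (measure_lt_top μ s) hbound)

lemma integral_sq_lt_one_of_concentrated [IsProbabilityMeasure μ] (hf : MemLp f 4 μ)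
    (hf0 : ∫ x, f x ∂μ = 0) (hs : NullMeasurableSet s μ) (hfs : ∀ x ∈ s, |f x - c| ≤ 0.1)
    (hsc : μ.real sᶜ < 1 / 10) (hsc4 : (∫ x, f x ^ 4 ∂μ) * μ.real sᶜ < 1 / 10) :
    ∫ x, f x ^ 2 ∂μ < 1 := by
  have hf2 : MemLp f 2 μ := hf.mono_exponent (by norm_num)
  have hsc0 : 0 ≤ μ.real sᶜ := measureReal_nonneg
  have hpq : μ.real s + μ.real sᶜ = 1 := by simpa using measureReal_add_measureReal_compl₀ hs
  have htail2 : ∫ x in sᶜ, f x ^ 2 ∂μ < 1 / 3 := by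
    nlinarith [sq_setIntegral_sq_le_integral_pow_four_mul hf sᶜ]
  have htail1 : |∫ x in sᶜ, f x ∂μ| < 1 / 3 := by
    have h4 : |∫ x in sᶜ, f x ∂μ| ^ 4 < (1 / 3) ^ 4 := by
      rw [Even.pow_abs ⟨2, rfl⟩]
      nlinarith [setIntegral_pow_four_le_integral_pow_four_mul hf sᶜ]
    exact lt_of_pow_lt_pow_left₀ 4 (by norm_num) h4
  have hc : |c| < 0.48 := by
    have hmean := abs_measureReal_mul_le_of_integral_eq_zero (hf2.integrable one_le_two) hf0 hs hfs
    rw [abs_mul, abs_of_nonneg measureReal_nonneg] at hmean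
    nlinarith
  have hs0 : 0 ≤ μ.real s := measureReal_nonneg
  nlinarith [integral_sq_le_of_abs_sub_le hf2 hs hfs, abs_nonneg c]

end Concentrated

theorem anti_concentration_of_hypercontractive_general
    {Ω : Type*} [MeasureSpace Ω] [IsProbabilityMeasure (ℙ : Measure Ω)]
    (K : ℝ) (z : Ω → ℝ)
    (hmom : MemLp z 4 ℙ)
    (hmean : ∫ ω, z ω = 0)
    (hvar : 1 ≤ ∫ ω, (z ω) ^ 2)
    (hfourth : ∫ ω, (z ω) ^ 4 ≤ K)
    (β : ℝ) :
    (ℙ {ω | |z ω - β| ≤ 0.1}).toReal ≤ 1 - 1 / (10 * K) := by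
  set A := {ω | |z ω - β| ≤ 0.1}
  have hA : NullMeasurableSet A ℙ :=
    nullMeasurableSet_le (hmom.1.aemeasurable.sub_const β).abs aemeasurable_const
  have hK : 1 ≤ K := by
    have := sq_setIntegral_sq_le_integral_pow_four_mul hmom Set.univ
    simp only [setIntegral_univ, probReal_univ, mul_one] at this
    nlinarith
  change (ℙ : Measure Ω).real A ≤ _
  by_contra! hconc
  have hKq : K * (ℙ : Measure Ω).real Aᶜ < 1 / 10 := by
    have hq : (ℙ : Measure Ω).real Aᶜ < 1 / (10 * K) := by
      have hpq := measureReal_add_measureReal_compl₀ (μ := (ℙ : Measure Ω)) hA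
      rw [probReal_univ] at hpq
      linarith
    rw [lt_div_iff₀ (by positivity)] at hq
    linarith
  have hq0 : 0 ≤ (ℙ : Measure Ω).real Aᶜ := measureReal_nonneg
  have hsmall := integral_sq_lt_one_of_concentrated hmom hmean hA (fun ω hω => hω)
    (by nlinarith) ((mul_le_mul_of_nonneg_right hfourth hq0).trans_lt hKq)
  linarith

/-- (Weak anti-concentration via hypercontractivity.)  Let `K ≥ 3` and let `z` be
a real random variable with `E[z] = 0`, `E[z²] ≥ 1` and `E[z⁴] ≤ K`.  Then for every real `β`,
`Pr[|z − β| ≤ 0.1] ≤ 1 − 1/(10K)`. -/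
theorem anti_concentration_of_hypercontractive
    {Ω : Type*} [MeasureSpace Ω] [IsProbabilityMeasure (ℙ : Measure Ω)]
    (K : ℝ) (hK : 3 ≤ K) (z : Ω → ℝ) (hmeas : Measurable z)
    (hmom : MemLp z 4 ℙ)
    (hmean : ∫ ω, z ω = 0)
    (hvar : 1 ≤ ∫ ω, (z ω) ^ 2)
    (hfourth : ∫ ω, (z ω) ^ 4 ≤ K)
    (β : ℝ) :
    (ℙ {ω | |z ω - β| ≤ 0.1}).toReal ≤ 1 - 1 / (10 * K) :=
  anti_concentration_of_hypercontractive_general K z hmom hmean hvar hfourth β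
end

section
/- Consider a linear dynamical system with random state and observation sequences satisfying x_{t+1} = A x_t + B u_t + w_t and y_t = C x_t + D u_t + z_t, where x_0 and the random vectors (u_t)_{t≥0}, (w_t)_{t≥0}, (z_t)_{t≥0} are mutually independent, all have mean zero and finite second moments, and each u_t satisfies E[u_t u_t^⊤] = I_p. Fix integers k, s ≥ 1, matrices α_1, …, α_s ∈ ℝ^{m×m}, and an integer t ≥ k + s, and set ŷ_t = y_t − Σ_{i=1}^{s} α_i y_{t−k−i}. Then for every integer j with 0 ≤ j ≤ k, E[ŷ_t u_{t−j}^⊤] = D if j = 0, and E[ŷ_t u_{t−j}^⊤] = C A^{j−1} B if 1 ≤ j ≤ k. -/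
open MeasureTheory ProbabilityTheory
open scoped ProbabilityTheory

/-- Embedding of `ℝ^d` into `ℕ → ℝ` (by zero padding), used to state mutual independence of
random vectors of different dimensions as independence of a single family. -/
def embedVec (d : ℕ) (v : Fin d → ℝ) : ℕ → ℝ :=
  fun i => if h : i < d then v ⟨i, h⟩ else 0

/-! The cross moments `E[· u_rᵀ]` are linear in the first argument, and by independence and
centring `u_r` is uncorrelated with `x 0`, with the noises and with the other inputs. By induction
on the state recursion, `E[x_τ u_rᵀ] = A^(τ-r-1) B` for `r < τ` and `0` otherwise, so
`E[y_τ u_rᵀ]` is the Markov parameter of lag `τ - r` (and `0` for `r > τ`). The lagged outputs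
`y (t - k - i)` in `ŷ_t` precede `u (t - j)` because `j ≤ k < k + i`, so they drop out;
`k + s ≤ t` keeps the natural subtraction `t - k - i` from truncating. -/

open Matrix

section CrossMoment

variable {Ω : Type*} [MeasurableSpace Ω] {μ : Measure Ω} {ι κ : Type*}
  {X X' : Ω → ι → ℝ} {Y : Ω → κ → ℝ}

noncomputable def crossMoment (μ : Measure Ω) (X : Ω → ι → ℝ) (Y : Ω → κ → ℝ) : Matrix ι κ ℝ :=
  Matrix.of fun a b => ∫ ω, X ω a * Y ω b ∂μ

theorem crossMoment_eq_zero_of_indepFun (hXY : IndepFun X Y μ) (hX : AEStronglyMeasurable X μ)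
    (hY : AEStronglyMeasurable Y μ) (hY₀ : ∀ b, ∫ ω, Y ω b ∂μ = 0) :
    crossMoment μ X Y = 0 := by
  ext a b
  have hab := IndepFun.integral_fun_mul_eq_mul_integral
    (hXY.comp (measurable_pi_apply a) (measurable_pi_apply b))
    ((continuous_apply a).comp_aestronglyMeasurable hX)
    ((continuous_apply b).comp_aestronglyMeasurable hY)
  simpa [crossMoment, Function.comp_def, hY₀] using hab

variable [Fintype ι]

theorem MeasureTheory.MemLp.mulVec {ι' : Type*} [Fintype ι'] (M : Matrix ι' ι ℝ)
    (hX : MemLp X 2 μ) : MemLp (fun ω => M *ᵥ X ω) 2 μ :=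
  MemLp.of_eval fun a => memLp_finsetSum _ fun c _ => (hX.eval c).const_mul (M a c)

variable [Fintype κ]

theorem integrable_eval_mul_eval (hX : MemLp X 2 μ) (hY : MemLp Y 2 μ) (a : ι) (b : κ) :
    Integrable (fun ω => X ω a * Y ω b) μ :=
  (hX.eval a).integrable_mul (hY.eval b)

theorem crossMoment_add_left (hX : MemLp X 2 μ) (hX' : MemLp X' 2 μ) (hY : MemLp Y 2 μ) :
    crossMoment μ (fun ω => X ω + X' ω) Y = crossMoment μ X Y + crossMoment μ X' Y := by
  ext a b
  simp only [crossMoment, of_apply, Matrix.add_apply, Pi.add_apply, add_mul]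
  exact integral_add (integrable_eval_mul_eval hX hY a b) (integrable_eval_mul_eval hX' hY a b)

theorem crossMoment_sub_left (hX : MemLp X 2 μ) (hX' : MemLp X' 2 μ) (hY : MemLp Y 2 μ) :
    crossMoment μ (fun ω => X ω - X' ω) Y = crossMoment μ X Y - crossMoment μ X' Y := by
  ext a b
  simp only [crossMoment, of_apply, Matrix.sub_apply, Pi.sub_apply, sub_mul]
  exact integral_sub (integrable_eval_mul_eval hX hY a b) (integrable_eval_mul_eval hX' hY a b)

theorem crossMoment_sum_left {ν : Type*} (s : Finset ν) {X : ν → Ω → ι → ℝ}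
    (hX : ∀ i ∈ s, MemLp (X i) 2 μ) (hY : MemLp Y 2 μ) :
    crossMoment μ (fun ω => ∑ i ∈ s, X i ω) Y = ∑ i ∈ s, crossMoment μ (X i) Y := by
  ext a b
  simp only [crossMoment, of_apply, Matrix.sum_apply, Finset.sum_apply, Finset.sum_mul]
  exact integral_finsetSum s fun i hi => integrable_eval_mul_eval (hX i hi) hY a b

theorem crossMoment_mulVec_left {ι' : Type*} (M : Matrix ι' ι ℝ) (hX : MemLp X 2 μ)
    (hY : MemLp Y 2 μ) :
    crossMoment μ (fun ω => M *ᵥ X ω) Y = M * crossMoment μ X Y := by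
  ext a b
  simp only [crossMoment, of_apply, mulVec, dotProduct, mul_apply, Finset.sum_mul, mul_assoc]
  rw [integral_finsetSum _ fun c _ => (integrable_eval_mul_eval hX hY c b).const_mul (M a c)]
  simp only [integral_const_mul]

theorem crossMoment_mulVec_add_mulVec_add_left {ι₁ ι₂ : Type*} [Fintype ι₁] [Fintype ι₂]
    (M : Matrix ι ι₁ ℝ) (N : Matrix ι ι₂ ℝ) {X₁ : Ω → ι₁ → ℝ} {X₂ : Ω → ι₂ → ℝ}
    (hX₁ : MemLp X₁ 2 μ) (hX₂ : MemLp X₂ 2 μ) (hX : MemLp X 2 μ) (hY : MemLp Y 2 μ) :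
    crossMoment μ (fun ω => M *ᵥ X₁ ω + N *ᵥ X₂ ω + X ω) Y =
      M * crossMoment μ X₁ Y + N * crossMoment μ X₂ Y + crossMoment μ X Y := by
  rw [crossMoment_add_left (X := fun ω => M *ᵥ X₁ ω + N *ᵥ X₂ ω)
      ((hX₁.mulVec M).add (hX₂.mulVec N)) hX hY,
    crossMoment_add_left (hX₁.mulVec M) (hX₂.mulVec N) hY,
    crossMoment_mulVec_left M hX₁ hY, crossMoment_mulVec_left N hX₂ hY]

end CrossMoment

section LinearSystem

variable {Ω : Type*} [MeasurableSpace Ω] {μ : Measure Ω} {ι κ ο : Type*}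
  [Fintype ι] [Fintype κ] [Fintype ο]
  {A : Matrix ι ι ℝ} {B : Matrix ι κ ℝ} {C : Matrix ο ι ℝ} {D : Matrix ο κ ℝ}
  {x w : ℕ → Ω → ι → ℝ} {u : ℕ → Ω → κ → ℝ} {z y : ℕ → Ω → ο → ℝ}

theorem memLp_state (hx : ∀ t ω, x (t + 1) ω = A *ᵥ x t ω + B *ᵥ u t ω + w t ω)
    (hx₀ : MemLp (x 0) 2 μ) (hu : ∀ t, MemLp (u t) 2 μ) (hw : ∀ t, MemLp (w t) 2 μ) :
    ∀ t, MemLp (x t) 2 μ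
  | 0 => hx₀
  | t + 1 => by
    rw [funext (hx t)]
    exact (((memLp_state hx hx₀ hu hw t).mulVec A).add ((hu t).mulVec B)).add (hw t)

theorem memLp_observation (hx : ∀ t ω, x (t + 1) ω = A *ᵥ x t ω + B *ᵥ u t ω + w t ω)
    (hy : ∀ t ω, y t ω = C *ᵥ x t ω + D *ᵥ u t ω + z t ω)
    (hx₀ : MemLp (x 0) 2 μ) (hu : ∀ t, MemLp (u t) 2 μ) (hw : ∀ t, MemLp (w t) 2 μ)
    (hz : ∀ t, MemLp (z t) 2 μ) (t : ℕ) : MemLp (y t) 2 μ := by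
  rw [funext (hy t)]
  exact (((memLp_state hx hx₀ hu hw t).mulVec C).add ((hu t).mulVec D)).add (hz t)

variable [DecidableEq ι]

def markovParameter (A : Matrix ι ι ℝ) (B : Matrix ι κ ℝ) (C : Matrix ο ι ℝ) (D : Matrix ο κ ℝ)
    (j : ℕ) : Matrix ο κ ℝ :=
  if j = 0 then D else C * A ^ (j - 1) * B

theorem crossMoment_observation_sub_lagged_input (hy : ∀ t, MemLp (y t) 2 μ)
    (hu : ∀ t, MemLp (u t) 2 μ)
    (hyu : ∀ t r, crossMoment μ (y t) (u r) =
      if r ≤ t then markovParameter A B C D (t - r) else 0)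
    (α : ℕ → Matrix ο ο ℝ) {k s t j : ℕ} (ht : k + s ≤ t) (hj : j ≤ k) :
    crossMoment μ (fun ω => y t ω - ∑ i ∈ Finset.Icc 1 s, α i *ᵥ y (t - k - i) ω) (u (t - j)) =
      markovParameter A B C D j := by
  have hlag : ∑ i ∈ Finset.Icc 1 s,
      crossMoment μ (fun ω => α i *ᵥ y (t - k - i) ω) (u (t - j)) = 0 := by
    refine Finset.sum_eq_zero fun i hi => ?_
    rw [Finset.mem_Icc] at hi
    rw [crossMoment_mulVec_left _ (hy _) (hu _), hyu, if_neg (by omega), Matrix.mul_zero]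
  rw [crossMoment_sub_left (hy t) (memLp_finsetSum _ fun i _ => (hy _).mulVec (α i)) (hu _),
    crossMoment_sum_left _ (fun i _ => (hy _).mulVec (α i)) (hu _), hlag, sub_zero, hyu,
    if_pos (Nat.sub_le t j), Nat.sub_sub_self (by omega)]


variable [DecidableEq κ]

theorem crossMoment_state_input (hx : ∀ t ω, x (t + 1) ω = A *ᵥ x t ω + B *ᵥ u t ω + w t ω)
    (hx₀ : MemLp (x 0) 2 μ) (hu : ∀ t, MemLp (u t) 2 μ) (hw : ∀ t, MemLp (w t) 2 μ)
    (hx₀u : ∀ r, crossMoment μ (x 0) (u r) = 0) (hwu : ∀ t r, crossMoment μ (w t) (u r) = 0)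
    (huu : ∀ t r, crossMoment μ (u t) (u r) = if t = r then 1 else 0) (t r : ℕ) :
    crossMoment μ (x t) (u r) = if r < t then A ^ (t - r - 1) * B else 0 := by
  induction t with
  | zero => simp [hx₀u]
  | succ t ih =>
    have hxt := memLp_state hx hx₀ hu hw t
    rw [funext (hx t), crossMoment_mulVec_add_mulVec_add_left A B hxt (hu t) (hw t) (hu r), ih,
      huu, hwu]
    rcases lt_trichotomy r t with hrt | rfl | htr
    · rw [if_pos hrt, if_neg hrt.ne', if_pos (by omega), ← Matrix.mul_assoc, ← pow_succ',
        show t - r - 1 + 1 = t + 1 - r - 1 by omega]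
      simp
    · simp
    · rw [if_neg (by omega), if_neg (by omega), if_neg (by omega)]
      simp

theorem crossMoment_observation_input (hx : ∀ t ω, x (t + 1) ω = A *ᵥ x t ω + B *ᵥ u t ω + w t ω)
    (hy : ∀ t ω, y t ω = C *ᵥ x t ω + D *ᵥ u t ω + z t ω)
    (hx₀ : MemLp (x 0) 2 μ) (hu : ∀ t, MemLp (u t) 2 μ) (hw : ∀ t, MemLp (w t) 2 μ)
    (hz : ∀ t, MemLp (z t) 2 μ)
    (hx₀u : ∀ r, crossMoment μ (x 0) (u r) = 0) (hwu : ∀ t r, crossMoment μ (w t) (u r) = 0)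
    (hzu : ∀ t r, crossMoment μ (z t) (u r) = 0)
    (huu : ∀ t r, crossMoment μ (u t) (u r) = if t = r then 1 else 0) (t r : ℕ) :
    crossMoment μ (y t) (u r) = if r ≤ t then markovParameter A B C D (t - r) else 0 := by
  have hxt := memLp_state hx hx₀ hu hw t
  rw [funext (hy t), crossMoment_mulVec_add_mulVec_add_left C D hxt (hu t) (hz t) (hu r),
    crossMoment_state_input hx hx₀ hu hw hx₀u hwu huu, huu, hzu, markovParameter]
  rcases lt_trichotomy r t with hrt | rfl | htr
  · rw [if_pos hrt, if_neg hrt.ne', if_pos hrt.le, if_neg (by omega), Matrix.mul_assoc]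
    simp
  · simp
  · rw [if_neg (by omega), if_neg (by omega), if_neg (by omega)]
    simp

end LinearSystem

theorem ProbabilityTheory.IndepFun.of_embedVec {Ω : Type*} [MeasurableSpace Ω] {μ : Measure Ω}
    {d e : ℕ} {X : Ω → Fin d → ℝ} {Y : Ω → Fin e → ℝ}
    (h : IndepFun (fun ω => embedVec d (X ω)) (fun ω => embedVec e (Y ω)) μ) :
    IndepFun X Y μ := by
  have hrestrict (d : ℕ) : Measurable fun f : ℕ → ℝ => fun i : Fin d => f i :=
    measurable_pi_lambda _ fun i => measurable_pi_apply (i : ℕ)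
  simpa [Function.comp_def, embedVec] using h.comp (hrestrict d) (hrestrict e)

theorem markov_parameter_estimator_unbiased_general
    {Ω : Type*} [MeasureSpace Ω]
    (n p m : ℕ)
    (A : Matrix (Fin n) (Fin n) ℝ) (B : Matrix (Fin n) (Fin p) ℝ)
    (C : Matrix (Fin m) (Fin n) ℝ) (D : Matrix (Fin m) (Fin p) ℝ)
    (x : ℕ → Ω → Fin n → ℝ) (u : ℕ → Ω → Fin p → ℝ) (w : ℕ → Ω → Fin n → ℝ)
    (z : ℕ → Ω → Fin m → ℝ) (y : ℕ → Ω → Fin m → ℝ)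
    (hx : ∀ (t : ℕ) (ω : Ω), x (t + 1) ω = A.mulVec (x t ω) + B.mulVec (u t ω) + w t ω)
    (hy : ∀ (t : ℕ) (ω : Ω), y t ω = C.mulVec (x t ω) + D.mulVec (u t ω) + z t ω)
    -- mutual independence of `x 0` and all the `u t`, `w t`, `z t`
    (hindep : iIndepFun
      (fun idx : Option (ℕ × Fin 3) =>
        idx.elim (fun ω => embedVec n (x 0 ω)) (fun tj =>
          if tj.2 = 0 then fun ω => embedVec p (u tj.1 ω)
          else if tj.2 = 1 then fun ω => embedVec n (w tj.1 ω)
          else fun ω => embedVec m (z tj.1 ω))) ℙ)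
    -- mean zero
    (humean : ∀ t a, ∫ ω, u t ω a = 0)
    -- finite second moments
    (hx0mom : ∀ a, MemLp (fun ω => x 0 ω a) 2 ℙ)
    (humom : ∀ t a, MemLp (fun ω => u t ω a) 2 ℙ)
    (hwmom : ∀ t a, MemLp (fun ω => w t ω a) 2 ℙ)
    (hzmom : ∀ t a, MemLp (fun ω => z t ω a) 2 ℙ)
    -- isotropic control: `E[u_t u_tᵀ] = I_p`
    (hucov : ∀ t (a b : Fin p), ∫ ω, u t ω a * u t ω b = if a = b then 1 else 0)
    (k s : ℕ)
    (α : ℕ → Matrix (Fin m) (Fin m) ℝ)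
    (t : ℕ) (ht : k + s ≤ t) :
    ∀ j : ℕ, j ≤ k → ∀ (a : Fin m) (b : Fin p),
      ∫ ω, (y t ω - ∑ i ∈ Finset.Icc 1 s, (α i).mulVec (y (t - k - i) ω)) a * u (t - j) ω b
        = (if j = 0 then D else C * A ^ (j - 1) * B) a b := by
  intro j hj a b
  have hx₀ : MemLp (x 0) 2 ℙ := MemLp.of_eval hx0mom
  have hu t : MemLp (u t) 2 ℙ := MemLp.of_eval (humom t)
  have hw t : MemLp (w t) 2 ℙ := MemLp.of_eval (hwmom t)
  have hz t : MemLp (z t) 2 ℙ := MemLp.of_eval (hzmom t)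
  have hcorr {d : ℕ} {X : Ω → Fin d → ℝ} (hX : MemLp X 2 ℙ) (r : ℕ)
      (h : IndepFun (fun ω => embedVec d (X ω)) (fun ω => embedVec p (u r ω)) ℙ) :
      crossMoment ℙ X (u r) = 0 :=
    crossMoment_eq_zero_of_indepFun h.of_embedVec hX.1 (hu r).1 (humean r)
  have hx₀u r := hcorr hx₀ r (hindep.indepFun (i := none) (j := some (r, 0)) (by simp))
  have hwu τ r := hcorr (hw τ) r (hindep.indepFun (i := some (τ, 1)) (j := some (r, 0)) (by simp))
  have hzu τ r := hcorr (hz τ) r (hindep.indepFun (i := some (τ, 2)) (j := some (r, 0)) (by simp))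
  have huu τ r : crossMoment ℙ (u τ) (u r) = if τ = r then 1 else 0 := by
    split_ifs with hτr
    · subst hτr
      ext a b
      exact (hucov τ a b).trans Matrix.one_apply.symm
    · exact hcorr (hu τ) r
        (hindep.indepFun (i := some (τ, 0)) (j := some (r, 0)) (by simpa using hτr))
  have hyu := crossMoment_observation_input hx hy hx₀ hu hw hz hx₀u hwu hzu huu
  exact congrFun (congrFun (crossMoment_observation_sub_lagged_input
    (memLp_observation hx hy hx₀ hu hw hz) hu hyu α ht hj) a) b

/-- (Cross-covariance of control and observation gives the Markov parameters.)
For a linear dynamical system `x (t+1) = A x t + B u t + w t`, `y t = C x t + D u t + z t` with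
`x 0` and the `u`'s, `w`'s, `z`'s mutually independent, mean zero, finite second moments and
`E[u_t u_tᵀ] = I`, for `k, s ≥ 1`, matrices `α₁, …, α_s`, `t ≥ k + s` and
`ŷ_t = y_t − ∑_{i=1}^s α_i y_{t−k−i}`, we have `E[ŷ_t u_{t−j}ᵀ] = D` if `j = 0` and
`E[ŷ_t u_{t−j}ᵀ] = C A^{j−1} B` if `1 ≤ j ≤ k`. -/
theorem markov_parameter_estimator_unbiased
    {Ω : Type*} [MeasureSpace Ω] [IsProbabilityMeasure (ℙ : Measure Ω)]
    (n p m : ℕ)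
    (A : Matrix (Fin n) (Fin n) ℝ) (B : Matrix (Fin n) (Fin p) ℝ)
    (C : Matrix (Fin m) (Fin n) ℝ) (D : Matrix (Fin m) (Fin p) ℝ)
    (x : ℕ → Ω → Fin n → ℝ) (u : ℕ → Ω → Fin p → ℝ) (w : ℕ → Ω → Fin n → ℝ)
    (z : ℕ → Ω → Fin m → ℝ) (y : ℕ → Ω → Fin m → ℝ)
    (hx : ∀ (t : ℕ) (ω : Ω), x (t + 1) ω = A.mulVec (x t ω) + B.mulVec (u t ω) + w t ω)
    (hy : ∀ (t : ℕ) (ω : Ω), y t ω = C.mulVec (x t ω) + D.mulVec (u t ω) + z t ω)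
    (hmeasx0 : Measurable (x 0)) (hmeasu : ∀ t, Measurable (u t))
    (hmeasw : ∀ t, Measurable (w t)) (hmeasz : ∀ t, Measurable (z t))
    -- mutual independence of `x 0` and all the `u t`, `w t`, `z t`
    (hindep : iIndepFun
      (fun idx : Option (ℕ × Fin 3) =>
        idx.elim (fun ω => embedVec n (x 0 ω)) (fun tj =>
          if tj.2 = 0 then fun ω => embedVec p (u tj.1 ω)
          else if tj.2 = 1 then fun ω => embedVec n (w tj.1 ω)
          else fun ω => embedVec m (z tj.1 ω))) ℙ)
    -- mean zero
    (hx0mean : ∀ a, ∫ ω, x 0 ω a = 0)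
    (humean : ∀ t a, ∫ ω, u t ω a = 0)
    (hwmean : ∀ t a, ∫ ω, w t ω a = 0)
    (hzmean : ∀ t a, ∫ ω, z t ω a = 0)
    -- finite second moments
    (hx0mom : ∀ a, MemLp (fun ω => x 0 ω a) 2 ℙ)
    (humom : ∀ t a, MemLp (fun ω => u t ω a) 2 ℙ)
    (hwmom : ∀ t a, MemLp (fun ω => w t ω a) 2 ℙ)
    (hzmom : ∀ t a, MemLp (fun ω => z t ω a) 2 ℙ)
    -- isotropic control: `E[u_t u_tᵀ] = I_p`
    (hucov : ∀ t (a b : Fin p), ∫ ω, u t ω a * u t ω b = if a = b then 1 else 0)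
    (k s : ℕ) (hk : 1 ≤ k) (hs : 1 ≤ s)
    (α : ℕ → Matrix (Fin m) (Fin m) ℝ)
    (t : ℕ) (ht : k + s ≤ t) :
    ∀ j : ℕ, j ≤ k → ∀ (a : Fin m) (b : Fin p),
      ∫ ω, (y t ω - ∑ i ∈ Finset.Icc 1 s, (α i).mulVec (y (t - k - i) ω)) a * u (t - j) ω b
        = (if j = 0 then D else C * A ^ (j - 1) * B) a b :=
  markov_parameter_estimator_unbiased_general n p m A B C D x u w z y hx hy hindep humean hx0mom
    humom hwmom hzmom hucov k s α t ht
end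

section
/- Let A ∈ ℂ^{n×n} with n ≥ 1 be a matrix all of whose eigenvalues have magnitude at most 1, let C ∈ ℂ^{m×n}, and let s ≥ 1 be an integer. Then there exists a nonzero vector v ∈ ℂ^n with ‖O_s v‖ ≤ √s · ‖C‖ · ‖v‖, where O_s is the order-s observability matrix; in particular the smallest singular value of O_s is at most √s‖C‖. -/
/-!
If `A v = μ v` with `v ≠ 0`, then `O_s v` stacks the vectors `μ ^ k • C v` for `k < s`, so
`‖O_s v‖ = (∑ₖ |μ| ^ (2k)) ^ (1/2) ‖C v‖`, and `|μ| ≤ 1` bounds this by `√s ‖C‖ ‖v‖`.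
Over `ℂ` such an eigenpair exists as soon as `n ≥ 1`.
-/

open scoped Matrix.Norms.L2Operator

noncomputable def enormC {ι : Type*} [Fintype ι] (v : ι → ℂ) : ℝ :=
  Real.sqrt (∑ i, ‖v i‖ ^ 2)

/-- The order-`s` observability matrix `O_s = [C; CA; CA²; …; CA^{s−1}]` (row blocks indexed by
`Fin s`). -/
noncomputable def obsMatC (n m s : ℕ) (A : Matrix (Fin n) (Fin n) ℂ) (C : Matrix (Fin m) (Fin n) ℂ) :
    Matrix (Fin s × Fin m) (Fin n) ℂ :=
  fun ir j => (C * A ^ (ir.1 : ℕ)) ir.2 j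

open Matrix

section enormC

variable {ι κ : Type*} [Fintype ι] [Fintype κ]

lemma enormC_eq_norm (v : ι → ℂ) : enormC v = ‖(EuclideanSpace.equiv ι ℂ).symm v‖ := by
  rw [EuclideanSpace.norm_eq, enormC]
  rfl

lemma enormC_mulVec_le [DecidableEq ι] (C : Matrix κ ι ℂ) (v : ι → ℂ) :
    enormC (C *ᵥ v) ≤ ‖C‖ * enormC v := by
  rw [enormC_eq_norm, enormC_eq_norm]
  exact C.l2_opNorm_mulVec ((EuclideanSpace.equiv ι ℂ).symm v)

lemma enormC_outerProduct (c : κ → ℂ) (w : ι → ℂ) :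
    enormC (fun p : κ × ι => c p.1 * w p.2) = enormC c * enormC w := by
  simp only [enormC, norm_mul, mul_pow, Fintype.sum_prod_type, ← Finset.mul_sum, ← Finset.sum_mul]
  exact Real.sqrt_mul (Finset.sum_nonneg fun _ _ => by positivity) _

lemma enormC_le_sqrt_card {c : κ → ℂ} (hc : ∀ k, ‖c k‖ ≤ 1) :
    enormC c ≤ Real.sqrt (Fintype.card κ) := by
  refine Real.sqrt_le_sqrt ?_
  calc ∑ k, ‖c k‖ ^ 2 ≤ ∑ _k : κ, (1 : ℝ) :=
        Finset.sum_le_sum fun k _ => pow_le_one₀ (norm_nonneg _) (hc k)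
    _ = Fintype.card κ := by simp

end enormC

lemma Matrix.exists_mem_roots_charpoly_mulVec_eq_smul {K ι : Type*} [Field K] [IsAlgClosed K]
    [Fintype ι] [DecidableEq ι] [Nonempty ι] (A : Matrix ι ι K) :
    ∃ μ ∈ A.charpoly.roots, ∃ v ≠ 0, A *ᵥ v = μ • v := by
  obtain ⟨μ, hμ⟩ := Module.End.exists_eigenvalue (Matrix.toLin' A)
  obtain ⟨v, hv⟩ := hμ.exists_hasEigenvector
  refine ⟨μ, ?_, v, hv.2, hv.apply_eq_smul⟩
  rw [Polynomial.mem_roots A.charpoly_monic.ne_zero, ← Matrix.charpoly_toLin']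
  exact (Module.End.hasEigenvalue_iff_isRoot_charpoly _ _).1 hμ

lemma Matrix.pow_mulVec_of_mulVec_eq_smul {K ι : Type*} [CommRing K] [Fintype ι] [DecidableEq ι]
    {A : Matrix ι ι K} {μ : K} {v : ι → K} (hv : A *ᵥ v = μ • v) (k : ℕ) :
    (A ^ k) *ᵥ v = μ ^ k • v := by
  induction k with
  | zero => simp
  | succ k ih => rw [pow_succ', ← mulVec_mulVec, ih, mulVec_smul, hv, smul_smul, pow_succ]

lemma obsMatC_mulVec_of_mulVec_eq_smul {n m s : ℕ} {A : Matrix (Fin n) (Fin n) ℂ}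
    (C : Matrix (Fin m) (Fin n) ℂ) {μ : ℂ} {v : Fin n → ℂ} (hv : A *ᵥ v = μ • v) :
    obsMatC n m s A C *ᵥ v = fun p => μ ^ (p.1 : ℕ) * (C *ᵥ v) p.2 := by
  ext ⟨k, i⟩
  change ((C * A ^ (k : ℕ)) *ᵥ v) i = _
  rw [← Matrix.mulVec_mulVec, Matrix.pow_mulVec_of_mulVec_eq_smul hv, Matrix.mulVec_smul,
    Pi.smul_apply, smul_eq_mul]

theorem observability_min_singular_value_bound_general (n m s : ℕ) (hn : 1 ≤ n)
    (A : Matrix (Fin n) (Fin n) ℂ) (C : Matrix (Fin m) (Fin n) ℂ)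
    (hA : ∀ μ ∈ A.charpoly.roots, ‖μ‖ ≤ 1) :
    ∃ v : Fin n → ℂ, v ≠ 0 ∧
      enormC ((obsMatC n m s A C).mulVec v) ≤ Real.sqrt s * ‖C‖ * enormC v := by
  have : Nonempty (Fin n) := ⟨⟨0, hn⟩⟩
  obtain ⟨μ, hμ, v, hv0, hAv⟩ := A.exists_mem_roots_charpoly_mulVec_eq_smul
  refine ⟨v, hv0, ?_⟩
  have hpow : ∀ k : Fin s, ‖μ ^ (k : ℕ)‖ ≤ 1 := fun k =>
    norm_pow μ k ▸ pow_le_one₀ (norm_nonneg μ) (hA μ hμ)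
  calc enormC (obsMatC n m s A C *ᵥ v)
      = enormC (fun k : Fin s => μ ^ (k : ℕ)) * enormC (C *ᵥ v) := by
        rw [obsMatC_mulVec_of_mulVec_eq_smul C hAv]
        exact enormC_outerProduct (fun k : Fin s => μ ^ (k : ℕ)) (C *ᵥ v)
    _ ≤ Real.sqrt s * (‖C‖ * enormC v) := by
        gcongr
        · exact Real.sqrt_nonneg _
        · simpa using enormC_le_sqrt_card hpow
        · exact enormC_mulVec_le C v
    _ = Real.sqrt s * ‖C‖ * enormC v := (mul_assoc _ _ _).symm

/-- If all eigenvalues of `A ∈ ℂ^{n×n}` (with `n ≥ 1`) have magnitude at most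
`1`, then for every `s ≥ 1` there is a nonzero vector `v` with `‖O_s v‖ ≤ √s ‖C‖ ‖v‖`; in
particular the smallest singular value of the observability matrix `O_s` is at most `√s ‖C‖`. -/
theorem observability_min_singular_value_bound (n m s : ℕ) (hn : 1 ≤ n) (hs : 1 ≤ s)
    (A : Matrix (Fin n) (Fin n) ℂ) (C : Matrix (Fin m) (Fin n) ℂ)
    (hA : ∀ μ ∈ A.charpoly.roots, ‖μ‖ ≤ 1) :
    ∃ v : Fin n → ℂ, v ≠ 0 ∧
      enormC ((obsMatC n m s A C).mulVec v) ≤ Real.sqrt s * ‖C‖ * enormC v :=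
  observability_min_singular_value_bound_general n m s hn A C hA
end

section
/- Let A ∈ ℝ^{n×n}, C ∈ ℝ^{m×n}, let t > s ≥ 1 be integers, and let κ, σ > 0. Suppose that ‖O_s v‖ ≥ σ‖v‖ for every v ∈ ℝ^n (i.e. the smallest singular value of the order-s observability matrix O_s is at least σ), and that the largest singular value of O_t satisfies σ_max(O_t) ≤ κσ. Then ‖A^{t−s}‖_F ≤ √n · κ, and consequently for every positive integer j, ‖A^{j(t−s)}‖_F ≤ (√n · κ)^j. -/
/-! The rows `(i + (t - s), r)`, `i < s`, of `O_t` form the matrix `O_s A^(t-s)`, so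
`σ ‖A^(t-s) v‖ ≤ ‖O_s A^(t-s) v‖ ≤ ‖O_t v‖ ≤ κ σ ‖v‖` and `A^(t-s)` is a `κ`-contraction.
Its columns then have norm at most `κ`, giving `‖A^(t-s)‖_F ≤ √n κ`, and the bound on
`A^(j(t-s))` follows from submultiplicativity of the Frobenius norm. -/

open scoped Matrix.Norms.L2Operator

/-- Euclidean norm of a real vector. -/
noncomputable def enormR {ι : Type*} [Fintype ι] (v : ι → ℝ) : ℝ :=
  Real.sqrt (∑ i, (v i) ^ 2)

/-- Frobenius norm of a real matrix. -/
noncomputable def frobR {ι κ : Type*} [Fintype ι] [Fintype κ] (M : Matrix ι κ ℝ) : ℝ :=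
  Real.sqrt (∑ i, ∑ j, (M i j) ^ 2)

/-- The order-`s` observability matrix `O_s = [C; CA; CA²; …; CA^{s−1}]` (row blocks indexed by
`Fin s`). -/
noncomputable def obsMatR (n m s : ℕ) (A : Matrix (Fin n) (Fin n) ℝ)
    (C : Matrix (Fin m) (Fin n) ℝ) : Matrix (Fin s × Fin m) (Fin n) ℝ :=
  fun ir j => (C * A ^ (ir.1 : ℕ)) ir.2 j

open scoped Matrix

variable {ι η ζ : Type*} [Fintype ι] [Fintype η] [Fintype ζ]

lemma enormR_sq (v : ι → ℝ) : enormR v ^ 2 = ∑ i, v i ^ 2 :=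
  Real.sq_sqrt (Finset.sum_nonneg fun _ _ => sq_nonneg _)

lemma enormR_eq_norm_toLp (v : ι → ℝ) : enormR v = ‖WithLp.toLp 2 v‖ := by
  simp [enormR, EuclideanSpace.norm_eq]

lemma enormR_comp_le {f : ι → η} (hf : Function.Injective f) (w : η → ℝ) :
    enormR (w ∘ f) ≤ enormR w := by
  refine Real.sqrt_le_sqrt ?_
  calc ∑ i, (w ∘ f) i ^ 2 = ∑ k ∈ Finset.univ.map ⟨f, hf⟩, w k ^ 2 := by simp
    _ ≤ ∑ k, w k ^ 2 :=
      Finset.sum_le_sum_of_subset_of_nonneg (Finset.subset_univ _) fun _ _ _ => sq_nonneg _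

lemma enormR_mulVec_le_l2_opNorm [DecidableEq η] (M : Matrix ι η ℝ) (v : η → ℝ) :
    enormR (M *ᵥ v) ≤ ‖M‖ * enormR v := by
  rw [enormR_eq_norm_toLp, enormR_eq_norm_toLp]
  exact M.l2_opNorm_mulVec (WithLp.toLp 2 v)

lemma frobR_le_sqrt_card_mul_of_enormR_mulVec_le [DecidableEq η] {M : Matrix ι η ℝ} {c : ℝ}
    (hc : 0 ≤ c) (h : ∀ v, enormR (M *ᵥ v) ≤ c * enormR v) :
    frobR M ≤ Real.sqrt (Fintype.card η) * c := by
  have hcol : ∀ j, ∑ i, M i j ^ 2 ≤ c ^ 2 := by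
    intro j
    have hj := h (Pi.single j 1)
    have hsingle : enormR (Pi.single j (1 : ℝ) : η → ℝ) = 1 := by
      simp [enormR, Pi.single_apply]
    rw [Matrix.mulVec_single_one, hsingle, mul_one] at hj
    rw [← enormR_sq]
    exact pow_le_pow_left₀ (Real.sqrt_nonneg _) hj 2
  calc frobR M = Real.sqrt (∑ j, ∑ i, M i j ^ 2) := by rw [frobR, Finset.sum_comm]
    _ ≤ Real.sqrt (Fintype.card η * c ^ 2) := by
      refine Real.sqrt_le_sqrt ?_
      simpa using Finset.sum_le_sum fun j (_ : j ∈ Finset.univ) => hcol j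
    _ = Real.sqrt (Fintype.card η) * c := by
      rw [Real.sqrt_mul (Nat.cast_nonneg _), Real.sqrt_sq hc]

lemma frobR_eq_sum_rpow (M : Matrix ι η ℝ) :
    frobR M = (∑ i, ∑ j, ‖M i j‖ ^ (2 : ℝ)) ^ (1 / 2 : ℝ) := by
  simp [frobR, Real.sqrt_eq_rpow]

lemma frobR_nonneg (M : Matrix ι η ℝ) : 0 ≤ frobR M :=
  Real.sqrt_nonneg _

lemma frobR_mul_le (M : Matrix ι η ℝ) (N : Matrix η ζ ℝ) : frobR (M * N) ≤ frobR M * frobR N := by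
  simpa only [Matrix.frobenius_norm_def, ← frobR_eq_sum_rpow]
    using Matrix.frobenius_norm_mul M N

lemma frobR_pow_le [DecidableEq ι] (M : Matrix ι ι ℝ) {j : ℕ} (hj : 1 ≤ j) :
    frobR (M ^ j) ≤ frobR M ^ j := by
  induction j, hj using Nat.le_induction with
  | base => simp
  | succ j _ ih =>
    calc frobR (M ^ (j + 1)) ≤ frobR (M ^ j) * frobR M := pow_succ M j ▸ frobR_mul_le _ _
      _ ≤ frobR M ^ j * frobR M := by gcongr; exact frobR_nonneg M
      _ = frobR M ^ (j + 1) := (pow_succ _ _).symm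

section Observability

variable {n m : ℕ} (A : Matrix (Fin n) (Fin n) ℝ) (C : Matrix (Fin m) (Fin n) ℝ)

lemma obsMatR_mul_pow {s t d : ℕ} (h : s + d ≤ t) :
    obsMatR n m s A C * A ^ d =
      (obsMatR n m t A C).submatrix (fun p => (⟨p.1 + d, by omega⟩, p.2)) id := by
  ext ⟨i, r⟩ j
  change (C * A ^ (i : ℕ) * A ^ d) r j = (C * A ^ ((i : ℕ) + d)) r j
  rw [pow_add, Matrix.mul_assoc]

lemma enormR_obsMatR_mulVec_pow_le {s t d : ℕ} (h : s + d ≤ t) (v : Fin n → ℝ) :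
    enormR (obsMatR n m s A C *ᵥ (A ^ d *ᵥ v)) ≤ enormR (obsMatR n m t A C *ᵥ v) := by
  rw [Matrix.mulVec_mulVec, obsMatR_mul_pow A C h]
  refine enormR_comp_le (fun p q hpq => ?_) (obsMatR n m t A C *ᵥ v)
  simp only [Prod.mk.injEq, Fin.mk.injEq] at hpq
  exact Prod.ext (Fin.ext (by omega)) hpq.2

lemma enormR_pow_sub_mulVec_le {s t : ℕ} (hst : s < t) {κ σ : ℝ} (hσ : 0 < σ)
    (hmin : ∀ v : Fin n → ℝ, σ * enormR v ≤ enormR ((obsMatR n m s A C).mulVec v))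
    (hmax : ‖obsMatR n m t A C‖ ≤ κ * σ) (v : Fin n → ℝ) :
    enormR (A ^ (t - s) *ᵥ v) ≤ κ * enormR v := by
  refine le_of_mul_le_mul_left ?_ hσ
  calc σ * enormR (A ^ (t - s) *ᵥ v)
      ≤ enormR (obsMatR n m s A C *ᵥ (A ^ (t - s) *ᵥ v)) := hmin _
    _ ≤ enormR (obsMatR n m t A C *ᵥ v) := enormR_obsMatR_mulVec_pow_le A C (by omega) v
    _ ≤ ‖obsMatR n m t A C‖ * enormR v := enormR_mulVec_le_l2_opNorm _ _
    _ ≤ κ * σ * enormR v := by gcongr; exact Real.sqrt_nonneg _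
    _ = σ * (κ * enormR v) := by ring

end Observability

theorem powers_bounded_of_conditioned_observability_general (n m : ℕ)
    (A : Matrix (Fin n) (Fin n) ℝ) (C : Matrix (Fin m) (Fin n) ℝ)
    (s t : ℕ) (hst : s < t) (κ σ : ℝ) (hσ : 0 < σ)
    (hmin : ∀ v : Fin n → ℝ, σ * enormR v ≤ enormR ((obsMatR n m s A C).mulVec v))
    (hmax : ‖obsMatR n m t A C‖ ≤ κ * σ) :
    frobR (A ^ (t - s)) ≤ Real.sqrt n * κ ∧
      ∀ j : ℕ, 1 ≤ j → frobR (A ^ (j * (t - s))) ≤ (Real.sqrt n * κ) ^ j := by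
  have hκ : 0 ≤ κ := nonneg_of_mul_nonneg_left ((norm_nonneg _).trans hmax) hσ
  have hfrob : frobR (A ^ (t - s)) ≤ Real.sqrt n * κ := by
    simpa using frobR_le_sqrt_card_mul_of_enormR_mulVec_le hκ
      (enormR_pow_sub_mulVec_le A C hst hσ hmin hmax)
  refine ⟨hfrob, fun j hj => ?_⟩
  calc frobR (A ^ (j * (t - s))) = frobR ((A ^ (t - s)) ^ j) := by rw [mul_comm, pow_mul]
    _ ≤ frobR (A ^ (t - s)) ^ j := frobR_pow_le _ hj
    _ ≤ (Real.sqrt n * κ) ^ j := pow_le_pow_left₀ (frobR_nonneg _) hfrob j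

/-- If the smallest singular value of `O_s` is at least `σ` (i.e.
`‖O_s v‖ ≥ σ ‖v‖` for all `v`) and the largest singular value (operator norm) of `O_t` is at most
`κ σ` for some `t > s ≥ 1`, then `‖A^{t−s}‖_F ≤ √n κ`, and consequently
`‖A^{j(t−s)}‖_F ≤ (√n κ)^j` for every positive integer `j`. -/
theorem powers_bounded_of_conditioned_observability (n m : ℕ)
    (A : Matrix (Fin n) (Fin n) ℝ) (C : Matrix (Fin m) (Fin n) ℝ)
    (s t : ℕ) (hs : 1 ≤ s) (hst : s < t) (κ σ : ℝ) (hκ : 0 < κ) (hσ : 0 < σ)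
    (hmin : ∀ v : Fin n → ℝ, σ * enormR v ≤ enormR ((obsMatR n m s A C).mulVec v))
    (hmax : ‖obsMatR n m t A C‖ ≤ κ * σ) :
    frobR (A ^ (t - s)) ≤ Real.sqrt n * κ ∧
      ∀ j : ℕ, 1 ≤ j → frobR (A ^ (j * (t - s))) ≤ (Real.sqrt n * κ) ^ j :=
  powers_bounded_of_conditioned_observability_general n m A C s t hst κ σ hσ hmin hmax
end

section
/- Let A ∈ ℝ^{n×n}, B ∈ ℝ^{n×p}, C ∈ ℝ^{m×n}, let v ∈ ℝ^n be a unit vector and δ > 0 be such that the pair (A, C) is (δ, v)-unobservable, and let u ∈ ℝ^p. Then for every integer T ≥ 0, ‖P_T(A, B + v u^⊤, C) − P_T(A, B, C)‖_F ≤ (T+1) · δ · ‖u‖. -/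
/-- The block lower-triangular matrix `P_T(A, B, C) ∈ ℝ^{m(T+1) × p(T+1)}` whose `(i, j)` block
(for `0 ≤ i, j ≤ T`) equals `C A^{i−j−1} B` if `i > j` and `0` otherwise. -/
def Pmat (n p m T : ℕ) (A : Matrix (Fin n) (Fin n) ℝ) (B : Matrix (Fin n) (Fin p) ℝ)
    (C : Matrix (Fin m) (Fin n) ℝ) :
    Matrix (Fin (T + 1) × Fin m) (Fin (T + 1) × Fin p) ℝ :=
  fun ir jc =>
    if (jc.1 : ℕ) < (ir.1 : ℕ) then (C * A ^ ((ir.1 : ℕ) - (jc.1 : ℕ) - 1) * B) ir.2 jc.2 else 0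

/-- If the pair `(A, C)` is `(δ, v)`-unobservable (i.e. `v` is a unit vector
with `‖C A^s v‖ ≤ δ` for every `s ≥ 0`), then for any `u ∈ ℝ^p` and integer `T ≥ 0`,
`‖P_T(A, B + v uᵀ, C) − P_T(A, B, C)‖_F ≤ (T+1) δ ‖u‖`. -/
theorem Pmat_perturbation_bound (n p m : ℕ)
    (A : Matrix (Fin n) (Fin n) ℝ) (B : Matrix (Fin n) (Fin p) ℝ)
    (C : Matrix (Fin m) (Fin n) ℝ)
    (v : Fin n → ℝ) (δ : ℝ) (hδ : 0 < δ)
    (hv : enormR v = 1)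
    (hunobs : ∀ s : ℕ, enormR ((C * A ^ s).mulVec v) ≤ δ)
    (u : Fin p → ℝ) (T : ℕ) :
    frobR (Pmat n p m T A (B + Matrix.vecMulVec v u) C - Pmat n p m T A B C)
      ≤ (T + 1 : ℝ) * δ * enormR u := by

  set D := Pmat n p m T A (B + Matrix.vecMulVec v u) C - Pmat n p m T A B C with hD
  have hu2nn : (0:ℝ) ≤ ∑ b, (u b)^2 := Finset.sum_nonneg fun _ _ => sq_nonneg _
  have henu : enormR u ^ 2 = ∑ b, (u b)^2 := Real.sq_sqrt hu2nn
  have hennn : 0 ≤ enormR u := Real.sqrt_nonneg _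
  have hbnn : 0 ≤ (T + 1 : ℝ) * δ * enormR u := by positivity
  have entry : ∀ (i j : Fin (T+1)) (a : Fin m) (b : Fin p),
      D (i,a) (j,b)
      = if (j:ℕ) < (i:ℕ) then ((C * A ^ ((i:ℕ)-(j:ℕ)-1)).mulVec v a) * u b else 0 := by
    intro i j a b
    simp only [hD, Matrix.sub_apply, Pmat]
    split
    · rw [Matrix.mul_add]
      simp [Matrix.add_apply, Matrix.mul_apply, Matrix.vecMulVec_apply, Matrix.mulVec,
        dotProduct, Finset.sum_mul, mul_assoc]
    · simp
  have hstep : ∀ i j : Fin (T+1),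
      (∑ a : Fin m, ∑ b : Fin p, (D (i,a) (j,b))^2) ≤ δ^2 * ∑ b, (u b)^2 := by
    intro i j
    by_cases h : (j:ℕ) < (i:ℕ)
    · have hw := hunobs ((i:ℕ)-(j:ℕ)-1)
      set w := (C * A ^ ((i:ℕ)-(j:ℕ)-1)).mulVec v with hwdef
      have hw2 : (∑ a, (w a)^2) ≤ δ^2 := by
        have : (∑ a, (w a)^2) = (enormR w)^2 :=
          (Real.sq_sqrt (Finset.sum_nonneg fun _ _ => sq_nonneg _)).symm
        rw [this]
        exact pow_le_pow_left₀ (Real.sqrt_nonneg _) hw 2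
      calc (∑ a : Fin m, ∑ b : Fin p, (D (i,a) (j,b))^2)
          = (∑ a, (w a)^2) * ∑ b, (u b)^2 := by
            simp only [entry, if_pos h, ← hwdef, mul_pow, ← Finset.mul_sum,
              ← Finset.sum_mul]
        _ ≤ δ^2 * ∑ b, (u b)^2 := mul_le_mul_of_nonneg_right hw2 hu2nn
    · have hz : (∑ a : Fin m, ∑ b : Fin p, (D (i,a) (j,b))^2) = 0 := by
        simp [entry, h]
      rw [hz]; positivity
  have key : (∑ ir : Fin (T+1) × Fin m, ∑ jc : Fin (T+1) × Fin p, (D ir jc)^2)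
      ≤ ((T + 1 : ℝ) * δ * enormR u)^2 := by
    calc (∑ ir : Fin (T+1) × Fin m, ∑ jc : Fin (T+1) × Fin p, (D ir jc)^2)
        = ∑ i : Fin (T+1), ∑ j : Fin (T+1), ∑ a : Fin m, ∑ b : Fin p, (D (i,a) (j,b))^2 := by
          simp only [Fintype.sum_prod_type]
          exact Finset.sum_congr rfl fun i _ => Finset.sum_comm
      _ ≤ ∑ _i : Fin (T+1), ∑ _j : Fin (T+1), δ^2 * ∑ b, (u b)^2 :=
          Finset.sum_le_sum fun i _ => Finset.sum_le_sum fun j _ => hstep i j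
      _ = ((T + 1 : ℝ) * δ * enormR u)^2 := by
          simp [Finset.sum_const, Finset.card_univ, henu, mul_pow]
          ring
  calc frobR D = Real.sqrt (∑ ir, ∑ jc, (D ir jc)^2) := rfl
    _ ≤ Real.sqrt (((T + 1 : ℝ) * δ * enormR u)^2) := Real.sqrt_le_sqrt key
    _ = (T + 1 : ℝ) * δ * enormR u := Real.sqrt_sq hbnn
end
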